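/- Let a be a node or focus of the holomorphic flow ẋ = F(x) with basin 𝒩. Then 𝒩 is simply connected. -/

import Mathlib

open Set Topology Filter

noncomputable section

/-- A (complete) flow of the planar vector field given by `F : ℂ → ℂ`,
i.e. a solution family of `ẋ = F(x)`. -/
structure HoloFlow (F : ℂ → ℂ) where
  Φ : ℝ → ℂ → ℂ
  init : ∀ x, Φ 0 x = x
  add : ∀ s t x, Φ (s + t) x = Φ s (Φ t x)
  hasDeriv : ∀ x t, HasDerivAt (fun τ => Φ τ x) (F (Φ t x)) t

/-- The bounded interior region determined by a planar set `Γ` (for a Jordan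
curve `Γ`, this is `Int Γ` of the Jordan curve theorem): the union of the
bounded connected components of the complement. -/
def interiorRegion (Γ : Set ℂ) : Set ℂ :=
  {z | z ∉ Γ ∧ Bornology.IsBounded (connectedComponentIn Γᶜ z)}

/-- The unbounded exterior region determined by a planar set `Γ`. -/
def exteriorRegion (Γ : Set ℂ) : Set ℂ :=
  {z | z ∉ Γ ∧ ¬ Bornology.IsBounded (connectedComponentIn Γᶜ z)}

/-- `J` is a closed Jordan curve: a continuous injective image of the unit circle. -/
def IsJordanCurve (J : Set ℂ) : Prop :=
  ∃ f : ℂ → ℂ, ContinuousOn f (Metric.sphere (0:ℂ) 1) ∧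
    Set.InjOn f (Metric.sphere (0:ℂ) 1) ∧ f '' (Metric.sphere (0:ℂ) 1) = J

/-- `a` is an equilibrium of order `m` of `F`. -/
def HasOrder (F : ℂ → ℂ) (a : ℂ) (m : ℕ) : Prop :=
  (∀ k < m, iteratedDeriv k F a = 0) ∧ iteratedDeriv m F a ≠ 0

namespace HoloFlow

variable {F : ℂ → ℂ} (φ : HoloFlow F)

/-- The orbit `Γ(x)` through `x`. -/
def orbit (x : ℂ) : Set ℂ := Set.range fun t => φ.Φ t x

/-- A set is flow-invariant. -/
def Invariant (A : Set ℂ) : Prop := ∀ x ∈ A, ∀ t : ℝ, φ.Φ t x ∈ A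

/-- The positive limit set `w₊(Γ(x))`. -/
def omegaP (x : ℂ) : Set ℂ :=
  {y | ∃ u : ℕ → ℝ, Tendsto u atTop atTop ∧
    Tendsto (fun n => φ.Φ (u n) x) atTop (nhds y)}

/-- The negative limit set `w₋(Γ(x))`. -/
def omegaM (x : ℂ) : Set ℂ :=
  {y | ∃ u : ℕ → ℝ, Tendsto u atTop atBot ∧
    Tendsto (fun n => φ.Φ (u n) x) atTop (nhds y)}

/-- `Γ(x)` is a closed periodic (nonconstant) orbit. -/
def IsPeriodicOrbit (x : ℂ) : Prop := F x ≠ 0 ∧ ∃ T > 0, φ.Φ T x = x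

/-- `a` is a center: an equilibrium all of whose nearby orbits are closed
periodic orbits surrounding `a`. -/
def IsCenter (a : ℂ) : Prop :=
  F a = 0 ∧ ∃ ε > 0, ∀ x ∈ Metric.ball a ε \ {a},
    φ.IsPeriodicOrbit x ∧ a ∈ interiorRegion (φ.orbit x)

/-- The period annulus (center basin) `𝒱` of the center `a`. -/
def periodAnnulus (a : ℂ) : Set ℂ :=
  {a} ∪ {x | φ.IsPeriodicOrbit x ∧ a ∈ interiorRegion (φ.orbit x)}

/-- `Γ(x)` is a homoclinic orbit at `a`. -/
def Homoclinic (a x : ℂ) : Prop :=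
  F x ≠ 0 ∧ φ.omegaP x = {a} ∧ φ.omegaM x = {a}

/-- `Γ(x)` is a sector-forming orbit at `a`: homoclinic, and every orbit
through the interior of the Jordan curve `Γ(x) ∪ {a}` is homoclinic at `a`. -/
def SectorForming (a x : ℂ) : Prop :=
  φ.Homoclinic a x ∧ ∀ z ∈ interiorRegion (φ.orbit x ∪ {a}), φ.Homoclinic a z

/-- The global elliptic sector `𝒮(Ξ)` at `a` generated by the sector-forming
orbit `Ξ = Γ(x₀)`. -/
def globalSector (a x₀ : ℂ) : Set ℂ :=
  φ.orbit x₀ ∪ interiorRegion (φ.orbit x₀ ∪ {a}) ∪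
    {x | φ.Homoclinic a x ∧ φ.orbit x₀ ⊆ interiorRegion (φ.orbit x ∪ {a})}

/-- The stable basin of attraction of `a`. -/
def basinP (a : ℂ) : Set ℂ := {x | φ.omegaP x = {a}}

/-- The unstable basin of repulsion of `a`. -/
def basinM (a : ℂ) : Set ℂ := {x | φ.omegaM x = {a}}

/-- `a` is an attracting node or focus. -/
def IsNodeFocusP (a : ℂ) : Prop :=
  F a = 0 ∧ deriv F a ≠ 0 ∧ (deriv F a).re ≠ 0 ∧
    ∃ ε > 0, Metric.ball a ε ⊆ φ.basinP a

/-- `a` is a repelling node or focus. -/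
def IsNodeFocusM (a : ℂ) : Prop :=
  F a = 0 ∧ deriv F a ≠ 0 ∧ (deriv F a).re ≠ 0 ∧
    ∃ ε > 0, Metric.ball a ε ⊆ φ.basinM a

/-- The heteroclinic region `ℋ` between `ap` and `am`. -/
def hetRegion (ap am : ℂ) : Set ℂ :=
  {x | φ.omegaP x = {ap} ∧ φ.omegaM x = {am}}

end HoloFlow

/-! Since `Re F'(a) ≠ 0` and a whole disc around `a` lies in the basin, `a` is attracting:
otherwise the time-reversed flow would not increase distances to `a` near `a`, and no orbit other
than the constant one could approach `a`. At an attracting equilibrium `⟪z - a, F z⟫ < 0` near `a`,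
so `‖z - a‖` does not increase along orbits close to `a`. Together with the continuity of the flow
(Gronwall) this makes the convergence `Φ t x → a` locally uniform in `x` on the basin, and flowing
for time `s / (1 - s)` contracts the basin onto `a` as `s` runs from `0` to `1`. -/

open Function Metric Real
open scoped InnerProductSpace

theorem tendsto_div_one_sub_nhdsLT_one :
    Tendsto (fun s : unitInterval => (s : ℝ) / (1 - s)) (𝓝[<] 1) atTop := by
  have hval : Tendsto (fun s : unitInterval => (s : ℝ)) (𝓝[<] 1) (𝓝 1) :=
    continuous_subtype_val.continuousWithinAt.tendsto
  have hgap : Tendsto (fun s : unitInterval => 1 - (s : ℝ)) (𝓝[<] 1) (𝓝[>] 0) :=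
    tendsto_nhdsWithin_iff.2 ⟨by simpa using (tendsto_const_nhds (x := (1 : ℝ))).sub hval,
      eventually_nhdsWithin_of_forall fun s (hs : s < 1) => sub_pos.2 (show (s : ℝ) < 1 from hs)⟩
  simpa only [div_eq_mul_inv, comp_def] using
    hval.pos_mul_atTop one_pos (tendsto_inv_nhdsGT_zero.comp hgap)

theorem ContractibleSpace.of_tendsto_flow {X : Type*} [TopologicalSpace X] {Φ : ℝ → X → X}
    (hΦ : Continuous (uncurry Φ)) (hΦ₀ : ∀ x, Φ 0 x = x) (a : X)
    (ha : ∀ x, Tendsto (uncurry Φ) (atTop ×ˢ 𝓝 x) (𝓝 a)) : ContractibleSpace X := by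
  classical
  set H : unitInterval × X → X := fun p => if (p.1 : ℝ) < 1 then Φ (p.1 / (1 - p.1)) p.2 else a
  have hH : Continuous H := by
    refine continuous_iff_continuousAt.2 fun ⟨s, x⟩ => ?_
    rcases lt_or_eq_of_le s.2.2 with hs | hs
    · have hlt : ∀ᶠ p : unitInterval × X in 𝓝 (s, x), (p.1 : ℝ) < 1 :=
        (isOpen_lt (by fun_prop) continuous_const).mem_nhds hs
      refine ContinuousAt.congr ?_ (hlt.mono fun p hp => (if_pos hp).symm)
      exact hΦ.continuousAt.comp (((continuous_subtype_val.comp continuous_fst).continuousAt.div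
        (by fun_prop) (sub_ne_zero.2 hs.ne')).prodMk continuous_snd.continuousAt)
    · obtain rfl : s = 1 := Subtype.ext hs
      rw [ContinuousAt, show H (1, x) = a from if_neg (lt_irrefl _), nhds_prod_eq,
        ← nhdsLT_sup_nhdsGE, sup_prod, tendsto_sup]
      constructor
      · refine ((ha x).comp (tendsto_div_one_sub_nhdsLT_one.prodMap tendsto_id)).congr' ?_
        filter_upwards [prod_mem_prod self_mem_nhdsWithin univ_mem] with p hp
        exact (if_pos hp.1).symm
      · refine tendsto_const_nhds.congr' ?_
        filter_upwards [prod_mem_prod self_mem_nhdsWithin univ_mem] with p hp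
        exact (if_neg (not_lt.2 hp.1)).symm
  exact (contractible_iff_id_nullhomotopic X).2 ⟨a, ⟨{
    toFun := H
    continuous_toFun := hH
    map_zero_left := fun x => by simp [H, hΦ₀]
    map_one_left := fun _ => if_neg (lt_irrefl _) }⟩⟩

theorem eventually_inner_sub_le_of_hasDerivAt {F : ℂ → ℂ} {a c : ℂ} (hF : HasDerivAt F c a)
    (ha : F a = 0) {μ : ℝ} (hμ : c.re < μ) :
    ∀ᶠ z in 𝓝 a, ⟪z - a, F z⟫_ℝ ≤ μ * ‖z - a‖ ^ 2 := by
  filter_upwards [hF.isLittleO.def (sub_pos.2 hμ)] with z hz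
  rw [ha, sub_zero] at hz
  have hlin : ⟪z - a, (z - a) • c⟫_ℝ = c.re * ‖z - a‖ ^ 2 := by
    rw [Complex.inner, smul_eq_mul, mul_right_comm, Complex.mul_conj, Complex.re_ofReal_mul,
      Complex.normSq_eq_norm_sq, mul_comm]
  calc ⟪z - a, F z⟫_ℝ = ⟪z - a, (z - a) • c⟫_ℝ + ⟪z - a, F z - (z - a) • c⟫_ℝ := by
        rw [← inner_add_right, add_sub_cancel]
    _ ≤ c.re * ‖z - a‖ ^ 2 + ‖z - a‖ * ((μ - c.re) * ‖z - a‖) :=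
        add_le_add hlin.le ((real_inner_le_norm _ _).trans
          (mul_le_mul_of_nonneg_left hz (norm_nonneg _)))
    _ = μ * ‖z - a‖ ^ 2 := by ring

namespace HoloFlow

variable {F : ℂ → ℂ} (φ : HoloFlow F) {a : ℂ}

theorem continuous_Φ_apply (x : ℂ) : Continuous (φ.Φ · x) :=
  continuous_iff_continuousAt.2 fun t => (φ.hasDeriv x t).continuousAt

theorem Φ_neg_Φ (t : ℝ) (x : ℂ) : φ.Φ (-t) (φ.Φ t x) = x := by
  rw [← φ.add, neg_add_cancel, φ.init]

def rev : HoloFlow (fun z => -F z) where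
  Φ t x := φ.Φ (-t) x
  init x := by simpa using φ.init x
  add s t x := by
    show φ.Φ (-(s + t)) x = φ.Φ (-s) (φ.Φ (-t) x)
    rw [neg_add, φ.add]
  hasDeriv x t := by
    have h : HasDerivAt (fun τ : ℝ => φ.Φ (-τ) x) ((-1 : ℝ) • F (φ.Φ (-t) x)) t :=
      (φ.hasDeriv x (-t)).scomp t (hasDerivAt_neg t)
    simpa using h

@[simp]
theorem rev_Φ (t : ℝ) (x : ℂ) : φ.rev.Φ t x = φ.Φ (-t) x := rfl

theorem omegaM_eq_rev_omegaP (x : ℂ) : φ.omegaM x = φ.rev.omegaP x := by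
  ext y
  constructor
  · rintro ⟨u, hu, hy⟩
    exact ⟨fun n => -u n, tendsto_neg_atBot_atTop.comp hu, by simpa using hy⟩
  · rintro ⟨u, hu, hy⟩
    exact ⟨fun n => -u n, tendsto_neg_atTop_atBot.comp hu, by simpa using hy⟩

theorem basinM_eq_rev_basinP (a : ℂ) : φ.basinM a = φ.rev.basinP a := by
  ext x
  show φ.omegaM x = {a} ↔ φ.rev.omegaP x = {a}
  rw [φ.omegaM_eq_rev_omegaP]

theorem omegaP_Φ (t : ℝ) (x : ℂ) : φ.omegaP (φ.Φ t x) = φ.omegaP x := by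
  ext y
  constructor
  · rintro ⟨u, hu, hy⟩
    exact ⟨fun n => u n + t, tendsto_atTop_add_const_right _ t hu, by simpa [φ.add] using hy⟩
  · rintro ⟨u, hu, hy⟩
    refine ⟨fun n => u n - t, tendsto_atTop_add_const_right _ (-t) hu, ?_⟩
    simpa [← φ.add] using hy

theorem Φ_mem_basinP {x : ℂ} (hx : x ∈ φ.basinP a) (t : ℝ) : φ.Φ t x ∈ φ.basinP a :=
  (φ.omegaP_Φ t x).trans hx

theorem exists_dist_Φ_lt_of_nonneg (hF : LocallyLipschitz F) (x : ℂ) (T : ℝ) {ε : ℝ}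
    (hε : 0 < ε) : ∃ δ > 0, ∀ y, dist y x < δ → ∀ t ∈ Icc 0 T, dist (φ.Φ t y) (φ.Φ t x) < ε := by
  obtain ⟨M, hM⟩ := isCompact_Icc.exists_bound_of_continuousOn (φ.continuous_Φ_apply x).continuousOn
  obtain ⟨K, hK⟩ := hF.locallyLipschitzOn.exists_lipschitzOnWith_of_compact
    (isCompact_closedBall (0 : ℂ) (M + 1))
  set η := min 1 (ε / 2)
  set δ := η * exp (-((K + 1) * T))
  -- Gronwall with a strict margin: the separation `B` grows at rate `K + 1`, while the vector
  -- field is `K`-Lipschitz as long as the separation stays below `η ≤ 1`.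
  set B : ℝ → ℝ := fun t => δ * exp ((K + 1) * t)
  have hBη : ∀ t ≤ T, B t ≤ η := fun t ht => by
    calc B t ≤ δ * exp ((K + 1) * T) := by simp only [B]; gcongr
      _ = η := by rw [mul_assoc, ← exp_add, neg_add_cancel, exp_zero, mul_one]
  refine ⟨δ, by positivity, fun y hy t ht => ?_⟩
  have hsep : ‖φ.Φ t y - φ.Φ t x‖ ≤ B t := by
    refine image_norm_le_of_norm_deriv_right_lt_deriv_boundary
      (f := fun s => φ.Φ s y - φ.Φ s x) (f' := fun s => F (φ.Φ s y) - F (φ.Φ s x))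
      (B := B) (B' := fun s => (K + 1) * B s)
      ((φ.continuous_Φ_apply y).sub (φ.continuous_Φ_apply x)).continuousOn
      (fun s _ => ((φ.hasDeriv y s).sub (φ.hasDeriv x s)).hasDerivWithinAt)
      (by simpa [B, φ.init, ← dist_eq_norm] using hy.le)
      (fun s => (((hasDerivAt_id s).const_mul (K + 1 : ℝ)).exp.const_mul δ).congr_deriv
        (by simp only [B, id]; ring)) ?_ ht
    intro s hs hsB
    have hxM : ‖φ.Φ s x‖ ≤ M := hM s (Ico_subset_Icc_self hs)
    have hclose : ‖φ.Φ s y - φ.Φ s x‖ ≤ 1 :=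
      hsB.le.trans ((hBη s hs.2.le).trans (min_le_left _ _))
    have hyK : φ.Φ s y ∈ closedBall (0 : ℂ) (M + 1) := by
      rw [mem_closedBall, dist_zero_right]
      linarith [norm_le_norm_add_norm_sub' (φ.Φ s y) (φ.Φ s x)]
    have hxK : φ.Φ s x ∈ closedBall (0 : ℂ) (M + 1) := by
      rw [mem_closedBall, dist_zero_right]
      linarith
    calc ‖F (φ.Φ s y) - F (φ.Φ s x)‖ ≤ K * ‖φ.Φ s y - φ.Φ s x‖ := hK.norm_sub_le hyK hxK
      _ < (K + 1) * B s := by rw [hsB]; linarith [show 0 < B s by positivity]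
  rw [dist_eq_norm]
  calc ‖φ.Φ t y - φ.Φ t x‖ ≤ η := hsep.trans (hBη t ht.2)
    _ ≤ ε / 2 := min_le_right _ _
    _ < ε := half_lt_self hε

theorem exists_dist_Φ_lt (hF : LocallyLipschitz F) (x : ℂ) (T : ℝ) {ε : ℝ} (hε : 0 < ε) :
    ∃ δ > 0, ∀ y, dist y x < δ → ∀ t, |t| ≤ T → dist (φ.Φ t y) (φ.Φ t x) < ε := by
  obtain ⟨δ₁, hδ₁, h₁⟩ := φ.exists_dist_Φ_lt_of_nonneg hF x T hε
  obtain ⟨δ₂, hδ₂, h₂⟩ := φ.rev.exists_dist_Φ_lt_of_nonneg hF.neg x T hε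
  refine ⟨min δ₁ δ₂, lt_min hδ₁ hδ₂, fun y hy t ht => ?_⟩
  rcases le_total 0 t with h | h
  · exact h₁ y (hy.trans_le (min_le_left _ _)) t ⟨h, (le_abs_self t).trans ht⟩
  · simpa using h₂ y (hy.trans_le (min_le_right _ _)) (-t)
      ⟨neg_nonneg.2 h, (neg_le_abs t).trans ht⟩

theorem continuous_uncurry_Φ (hF : LocallyLipschitz F) : Continuous (uncurry φ.Φ) := by
  refine continuous_iff_continuousAt.2 fun ⟨t₀, x₀⟩ => Metric.tendsto_nhds.2 fun ε hε => ?_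
  obtain ⟨δ, hδ, hclose⟩ := φ.exists_dist_Φ_lt hF x₀ (|t₀| + 1) (half_pos hε)
  have hT : ∀ᶠ t in 𝓝 t₀, |t| < |t₀| + 1 :=
    continuous_abs.continuousAt.eventually_lt continuousAt_const (lt_add_one _)
  have hx₀ := Metric.tendsto_nhds.1 ((φ.continuous_Φ_apply x₀).tendsto t₀) _ (half_pos hε)
  rw [nhds_prod_eq]
  filter_upwards [prod_mem_prod (hT.and hx₀) (ball_mem_nhds x₀ hδ)] with ⟨t, y⟩ ⟨⟨ht, htx₀⟩, hy⟩
  calc dist (φ.Φ t y) (φ.Φ t₀ x₀) ≤ dist (φ.Φ t y) (φ.Φ t x₀) + dist (φ.Φ t x₀) (φ.Φ t₀ x₀) :=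
        dist_triangle _ _ _
    _ < ε / 2 + ε / 2 := add_lt_add (hclose y hy t ht.le) htx₀
    _ = ε := add_halves ε

def DistNonincreasingNear (a : ℂ) : Prop :=
  ∃ ε > 0, ∀ y ∈ closedBall a ε, ∀ t, 0 ≤ t → dist (φ.Φ t y) a ≤ dist y a

theorem distNonincreasingNear_of_hasDerivAt {c : ℂ} (hc : HasDerivAt F c a) (ha : F a = 0)
    (hre : c.re < 0) : φ.DistNonincreasingNear a := by
  obtain ⟨ρ, hρ, hinner⟩ := Metric.eventually_nhds_iff_ball.1
    (eventually_inner_sub_le_of_hasDerivAt hc ha (by linarith : c.re < c.re / 2))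
  refine ⟨ρ / 2, half_pos hρ, fun y hy t ht => ?_⟩
  have hy2 : dist y a ^ 2 < ρ ^ 2 / 2 := by
    rw [mem_closedBall] at hy
    nlinarith [dist_nonneg (x := y) (y := a)]
  -- The squared distance cannot reach any level `r ∈ (‖y - a‖², ρ²)`: on the sphere of radius
  -- `√r` the vector field points strictly inwards.
  have hlevel : ∀ r, dist y a ^ 2 < r → r < ρ ^ 2 → dist (φ.Φ t y) a ^ 2 ≤ r := by
    intro r hr hrρ
    simp only [dist_eq_norm] at hr ⊢
    refine image_le_of_deriv_right_lt_deriv_boundary (f := fun s => ‖φ.Φ s y - a‖ ^ 2)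
      (f' := fun s => 2 * ⟪φ.Φ s y - a, F (φ.Φ s y)⟫_ℝ) (B := fun _ => r) (B' := fun _ => 0)
      (((φ.continuous_Φ_apply y).sub continuous_const).norm.pow 2).continuousOn
      (fun s _ => ((φ.hasDeriv y s).sub_const a).norm_sq.hasDerivWithinAt)
      (by simpa [φ.init] using hr.le) (fun _ => hasDerivAt_const _ _) ?_ ⟨ht, le_rfl⟩
    intro s _ hsr
    have hball : φ.Φ s y ∈ ball a ρ := by
      rw [mem_ball, dist_eq_norm]
      exact lt_of_pow_lt_pow_left₀ 2 hρ.le (hsr.trans_lt hrρ)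
    have := hinner _ hball
    rw [hsr] at this
    nlinarith
  refine (pow_le_pow_iff_left₀ dist_nonneg dist_nonneg two_ne_zero).1
    (le_of_forall_gt_imp_ge_of_dense fun r hr => ?_)
  exact (hlevel (min r (ρ ^ 2 / 2)) (lt_min hr hy2) ((min_le_right _ _).trans_lt
    (half_lt_self (by positivity)))).trans (min_le_left _ _)

namespace DistNonincreasingNear

variable {φ}

theorem Φ_eq (h : φ.DistNonincreasingNear a) (t : ℝ) : φ.Φ t a = a := by
  obtain ⟨ε, hε, hdist⟩ := h
  have hfwd : ∀ t, 0 ≤ t → φ.Φ t a = a := fun t ht =>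
    dist_le_zero.1 ((hdist a (mem_closedBall_self hε.le) t ht).trans_eq (dist_self a))
  rcases le_total 0 t with ht | ht
  · exact hfwd t ht
  · simpa [hfwd (-t) (neg_nonneg.2 ht)] using φ.Φ_neg_Φ (-t) a

theorem mem_basinP (h : φ.DistNonincreasingNear a) : a ∈ φ.basinP a := by
  ext y
  simp only [omegaP, h.Φ_eq, mem_singleton_iff]
  constructor
  · rintro ⟨u, -, hy⟩
    exact tendsto_nhds_unique hy tendsto_const_nhds
  · rintro rfl
    exact ⟨fun n => n, tendsto_natCast_atTop_atTop, tendsto_const_nhds⟩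

theorem tendsto_Φ (h : φ.DistNonincreasingNear a) (hΦ : Continuous (uncurry φ.Φ)) {x : ℂ}
    (hx : x ∈ φ.basinP a) : Tendsto (uncurry φ.Φ) (atTop ×ˢ 𝓝 x) (𝓝 a) := by
  obtain ⟨ρ, hρ, hdist⟩ := h
  refine nhds_basis_closedBall.tendsto_right_iff.2 fun ε hε => ?_
  obtain ⟨u, -, hux⟩ : a ∈ φ.omegaP x := hx ▸ rfl
  obtain ⟨n, hn⟩ := (hux.eventually (ball_mem_nhds a (lt_min hε hρ))).exists
  have hnear : ∀ᶠ y in 𝓝 x, φ.Φ (u n) y ∈ ball a (min ε ρ) :=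
    (hΦ.comp (Continuous.prodMk_right (u n))).continuousAt.eventually_mem (isOpen_ball.mem_nhds hn)
  filter_upwards [(eventually_ge_atTop (u n)).prod_mk hnear] with ⟨t, y⟩ ⟨ht, hy⟩
  rw [mem_ball] at hy
  have hsplit : φ.Φ t y = φ.Φ (t - u n) (φ.Φ (u n) y) := by rw [← φ.add, sub_add_cancel]
  rw [mem_closedBall]
  simp only [uncurry_apply_pair, hsplit]
  exact (hdist _ (mem_closedBall.2 (hy.le.trans (min_le_right _ _))) _ (sub_nonneg.2 ht)).trans
    (hy.le.trans (min_le_left _ _))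

end DistNonincreasingNear

theorem basinP_subset_singleton (h : φ.rev.DistNonincreasingNear a) : φ.basinP a ⊆ {a} := by
  intro x hx
  obtain ⟨ε, hε, hdist⟩ := h
  obtain ⟨u, hu, hux⟩ : a ∈ φ.omegaP x := hx ▸ rfl
  have hle : ∀ᶠ n in atTop, dist x a ≤ dist (φ.Φ (u n) x) a := by
    filter_upwards [hu.eventually_ge_atTop 0, hux.eventually (closedBall_mem_nhds a hε)]
      with n hn hnear
    simpa [Φ_neg_Φ] using hdist _ hnear (u n) hn
  exact dist_le_zero.1 (ge_of_tendsto (tendsto_iff_dist_tendsto_zero.1 hux) hle)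

theorem contractibleSpace_basinP (hF : LocallyLipschitz F) (h : φ.DistNonincreasingNear a) :
    ContractibleSpace (φ.basinP a) := by
  have hΦ := φ.continuous_uncurry_Φ hF
  refine ContractibleSpace.of_tendsto_flow (Φ := fun t x => ⟨φ.Φ t x, φ.Φ_mem_basinP x.2 t⟩)
    ((hΦ.comp (continuous_fst.prodMk (continuous_subtype_val.comp continuous_snd))).subtype_mk _)
    (fun x => Subtype.ext (φ.init x)) ⟨a, h.mem_basinP⟩ fun x => ?_
  exact tendsto_subtype_rng.2
    ((h.tendsto_Φ hΦ x.2).comp (tendsto_id.prodMap continuous_subtype_val.continuousAt))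

section NodeFocus

variable {φ}

theorem IsNodeFocusP.re_deriv_neg (hF : Differentiable ℂ F) (h : φ.IsNodeFocusP a) :
    (deriv F a).re < 0 := by
  obtain ⟨ha, -, hre, ε, hε, hball⟩ := h
  refine hre.lt_or_gt.resolve_right fun hpos => ?_
  have hrev : φ.rev.DistNonincreasingNear a :=
    φ.rev.distNonincreasingNear_of_hasDerivAt (hF a).hasDerivAt.neg (by simp [ha])
      (by simpa using hpos)
  have hsub : ball a ε ⊆ {a} := hball.trans (φ.basinP_subset_singleton hrev)
  simpa using interior_maximal hsub isOpen_ball (mem_ball_self hε)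

theorem IsNodeFocusP.simplyConnectedSpace_basinP (hF : Differentiable ℂ F)
    (h : φ.IsNodeFocusP a) : SimplyConnectedSpace (φ.basinP a) :=
  have := φ.contractibleSpace_basinP (hF.contDiff (n := 1)).locallyLipschitz
    (φ.distNonincreasingNear_of_hasDerivAt (hF a).hasDerivAt h.1 (h.re_deriv_neg hF))
  SimplyConnectedSpace.ofContractible _

theorem IsNodeFocusM.rev (h : φ.IsNodeFocusM a) : φ.rev.IsNodeFocusP a := by
  obtain ⟨ha, hd, hre, ε, hε, hball⟩ := h
  refine ⟨by simp [ha], by simpa [deriv.fun_neg] using hd, by simpa [deriv.fun_neg] using hre,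
    ε, hε, φ.basinM_eq_rev_basinP a ▸ hball⟩

end NodeFocus

end HoloFlow

theorem stmt14_general {F : ℂ → ℂ} (φ : HoloFlow F) (hF : Differentiable ℂ F)
    (a : ℂ) (N : Set ℂ)
    (hN : (φ.IsNodeFocusP a ∧ N = φ.basinP a) ∨ (φ.IsNodeFocusM a ∧ N = φ.basinM a)) :
    SimplyConnectedSpace ↥N := by
  rcases hN with ⟨h, rfl⟩ | ⟨h, rfl⟩
  · exact h.simplyConnectedSpace_basinP hF
  · rw [φ.basinM_eq_rev_basinP]
    exact h.rev.simplyConnectedSpace_basinP hF.fun_neg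

theorem stmt14 {F : ℂ → ℂ} (φ : HoloFlow F) (hF : Differentiable ℂ F) (hF0 : F ≠ 0)
    (a : ℂ) (N : Set ℂ)
    (hN : (φ.IsNodeFocusP a ∧ N = φ.basinP a) ∨ (φ.IsNodeFocusM a ∧ N = φ.basinM a)) :
    SimplyConnectedSpace ↥N :=
  stmt14_general φ hF a N hN
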